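/- Let C be a ring and let 𝒞 be the smallest class of C-modules containing all free C-modules, stable under filtered colimits, and stable under cokernels of cofibrations. If f : F → M is an epimorphism from a free C-module F onto a module M belonging to 𝒞, then the kernel of f belongs to 𝒞. -/

import Mathlib

universe u

open CategoryTheory CategoryTheory.Limits

/-- A class of `R`-modules is stable under filtered colimits if, for every
filtered diagram of modules all of whose objects belong to the class, the
colimit (i.e. the point of any colimit cocone) again belongs to the class. -/
def StableUnderFilteredColimits (R : Type u) [Ring R] (S : Set (ModuleCat.{u} R)) : Prop :=
  ∀ (J : Type u) (_ : SmallCategory J) (_ : IsFiltered J)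
    (F : J ⥤ ModuleCat.{u} R) (c : Cocone F), IsColimit c →
    (∀ j : J, F.obj j ∈ S) → c.pt ∈ S

/-- The 2/3 axiom: for every short exact sequence `0 → M → N → P → 0`, if two of the
three modules belong to the class, then so does the third. -/
def SatisfiesTwoOfThree (R : Type u) [Ring R] (S : Set (ModuleCat.{u} R)) : Prop :=
  ∀ (M N P : ModuleCat.{u} R) (f : M →ₗ[R] N) (g : N →ₗ[R] P),
    Function.Injective f → Function.Surjective g → Function.Exact f g →
      ((M ∈ S → N ∈ S → P ∈ S) ∧ (M ∈ S → P ∈ S → N ∈ S) ∧ (N ∈ S → P ∈ S → M ∈ S))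

/-- A class of `R`-modules is exact if it is stable under filtered colimits and
satisfies the 2/3 axiom. -/
def IsExactClass (R : Type u) [Ring R] (S : Set (ModuleCat.{u} R)) : Prop :=
  StableUnderFilteredColimits R S ∧ SatisfiesTwoOfThree R S

/-- An `R`-module is regular (in the sense of Vogel) if it belongs to every exact class
containing the module `R` itself (i.e. to the smallest such class). -/
def IsRegularModule (R : Type u) [Ring R] (M : ModuleCat.{u} R) : Prop :=
  ∀ S : Set (ModuleCat.{u} R), IsExactClass R S → ModuleCat.of R R ∈ S → M ∈ S

/-- A ring `R` is regular in the sense of Vogel if every `R`-module is regular,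
i.e. every exact class of `R`-modules containing `R` contains all `R`-modules. -/
def IsVogelRegular (R : Type u) [Ring R] : Prop :=
  ∀ M : ModuleCat.{u} R, IsRegularModule R M

/-- A ring is right regular (in the sense of Vogel) if the opposite ring is regular for
left modules, i.e. the category of right `R`-modules (= left `Rᵐᵒᵖ`-modules) has the
Vogel regularity property. -/
def IsVogelRightRegular (R : Type u) [Ring R] : Prop := IsVogelRegular Rᵐᵒᵖ

/-- A module is flat iff it is a filtered colimit of finitely generated free modules
(Lazard's theorem); we take this characterization as the definition of flatness,
which makes sense over an arbitrary (possibly non-commutative) ring. -/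
def IsLazardFlat (R : Type u) [Ring R] (M : Type u) [AddCommGroup M] [Module R M] : Prop :=
  ∃ (J : Type u) (_ : SmallCategory J) (_ : IsFiltered J)
    (F : J ⥤ ModuleCat.{u} R) (c : Cocone F) (_ : IsColimit c),
    (∀ j : J, ∃ n : ℕ, Nonempty ((F.obj j) ≃ₗ[R] (Fin n → R))) ∧
    Nonempty (c.pt ≃ₗ[R] M)

/-- A class of modules is stable under cokernels of cofibrations if, for every short
exact sequence `0 → M → N → P → 0` with `M` and `N` in the class, `P` also belongs
to the class. -/
def StableUnderCokernelsOfCofibrations (R : Type u) [Ring R] (S : Set (ModuleCat.{u} R)) : Prop :=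
  ∀ (M N P : ModuleCat.{u} R) (f : M →ₗ[R] N) (g : N →ₗ[R] P),
    Function.Injective f → Function.Surjective g → Function.Exact f g →
      M ∈ S → N ∈ S → P ∈ S

/-- The defining properties of the class `𝒞`: containing all free modules, stability
under filtered colimits, and stability under cokernels of cofibrations. -/
def IsFreeColimCokerClosed (R : Type u) [Ring R] (S : Set (ModuleCat.{u} R)) : Prop :=
  (∀ M : ModuleCat.{u} R, Module.Free R M → M ∈ S) ∧
    StableUnderFilteredColimits R S ∧ StableUnderCokernelsOfCofibrations R S

/-- The smallest class `𝒞` of `R`-modules containing all free modules, stable under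
filtered colimits and under cokernels of cofibrations (realized as the intersection
of all such classes). -/
def VogelClassC (R : Type u) [Ring R] : Set (ModuleCat.{u} R) :=
  {M : ModuleCat.{u} R | ∀ S : Set (ModuleCat.{u} R), IsFreeColimCokerClosed R S → M ∈ S}

/-!
Induct along the three closure properties defining `𝒞`, proving the stronger statement that
`ker (g : X ↠ M)` lies in `𝒞` whenever `X` and `M` do. For free `M` the sequence splits. For a
cokernel `M = N / A` one passes to the fibre product `N ×_M X`, an extension of `X` by `A`, and
this is why `𝒞` must first be shown to be closed under extensions (by the same kind of
induction). For a filtered colimit `M = colim Mⱼ`, the canonical free covers `C[Mⱼ] ↠ Mⱼ` form a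
diagram whose colimit is the canonical free cover `C[M] ↠ M`; filtered colimits being exact, its
kernel is the colimit of the kernels, and a Schanuel-type comparison passes from this one cover
of `M` to an arbitrary `g`.
-/

namespace LinearMap

variable {R : Type*} [Ring R] {Y B Q : Type*} [AddCommGroup Y] [AddCommGroup B] [AddCommGroup Q]
  [Module R Y] [Module R B] [Module R Q] (p : Y →ₗ[R] Q) (g : B →ₗ[R] Q)

def fiberProduct : Submodule R (Y × B) := ker (p ∘ₗ fst R Y B - g ∘ₗ snd R Y B)

def fiberProductFst : fiberProduct p g →ₗ[R] Y := fst R Y B ∘ₗ (fiberProduct p g).subtype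

def fiberProductSnd : fiberProduct p g →ₗ[R] B := snd R Y B ∘ₗ (fiberProduct p g).subtype

variable {p g}

theorem mem_fiberProduct {x : Y × B} : x ∈ fiberProduct p g ↔ p x.1 = g x.2 := sub_eq_zero

theorem fiberProductFst_surjective (hg : Function.Surjective g) :
    Function.Surjective (fiberProductFst p g) := fun y =>
  let ⟨b, hb⟩ := hg (p y)
  ⟨⟨(y, b), mem_fiberProduct.2 hb.symm⟩, rfl⟩

theorem fiberProductSnd_surjective (hp : Function.Surjective p) :
    Function.Surjective (fiberProductSnd p g) := fun b =>
  let ⟨y, hy⟩ := hp (g b)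
  ⟨⟨(y, b), mem_fiberProduct.2 hy⟩, rfl⟩

theorem fiberProductSnd_injective (hp : Function.Injective p) :
    Function.Injective (fiberProductSnd p g) := fun x x' h =>
  Subtype.ext <| Prod.ext (hp <| (mem_fiberProduct.1 x.2).trans <|
    (congrArg g h).trans (mem_fiberProduct.1 x'.2).symm) h

variable (p g)

noncomputable def kerFiberProductFstEquiv : ker (fiberProductFst p g) ≃ₗ[R] ker g :=
  LinearEquiv.ofBijective
    ((fiberProductSnd p g ∘ₗ (ker (fiberProductFst p g)).subtype).codRestrict (ker g) fun x => by
      have h := mem_fiberProduct.1 x.1.2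
      rw [show (x.1.1.1 : Y) = 0 from x.2, map_zero] at h
      exact h.symm)
    ⟨fun x x' h => Subtype.ext <| Subtype.ext <| Prod.ext (x.2.trans x'.2.symm) congr($h.1),
     fun b => ⟨⟨⟨(0, b), mem_fiberProduct.2 (by simp)⟩, rfl⟩, rfl⟩⟩

noncomputable def kerFiberProductSndEquiv : ker (fiberProductSnd p g) ≃ₗ[R] ker p :=
  LinearEquiv.ofBijective
    ((fiberProductFst p g ∘ₗ (ker (fiberProductSnd p g)).subtype).codRestrict (ker p) fun x => by
      have h := mem_fiberProduct.1 x.1.2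
      rw [show (x.1.1.2 : B) = 0 from x.2, map_zero] at h
      exact h)
    ⟨fun x x' h => Subtype.ext <| Subtype.ext <| Prod.ext congr($h.1) (x.2.trans x'.2.symm),
     fun y => ⟨⟨⟨(y, 0), mem_fiberProduct.2 (by simp)⟩, rfl⟩, rfl⟩⟩

end LinearMap

namespace ModuleCat

variable {C : Type u} [Ring C] {J : Type u} [SmallCategory J] [IsFiltered J]

noncomputable def isColimitOfExistsRep {D : J ⥤ ModuleCat.{u} C} (s : Cocone D)
    (hrep : ∀ y : s.pt, ∃ (j : J) (x : D.obj j), s.ι.app j x = y)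
    (hzero : ∀ (j : J) (x : D.obj j), s.ι.app j x = 0 → ∃ (k : J) (t : j ⟶ k), D.map t x = 0) :
    IsColimit s :=
  isColimitOfReflects (forget (ModuleCat C)) <|
    Types.FilteredColimit.isColimitOf' _ _
      (fun y => by obtain ⟨j, x, rfl⟩ := hrep y; exact ⟨j, x, rfl⟩)
      (fun j x y h => by
        obtain ⟨k, t, ht⟩ := hzero j (x - y) (by simpa [sub_eq_zero] using h)
        exact ⟨k, t, by simpa [sub_eq_zero] using ht⟩)

theorem exists_map_eq_zero_of_isColimit {D : J ⥤ ModuleCat.{u} C} {c : Cocone D}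
    (hc : IsColimit c) {j : J} {x : D.obj j} (hx : c.ι.app j x = 0) :
    ∃ (k : J) (t : j ⟶ k), D.map t x = 0 := by
  obtain ⟨k, t, t', h⟩ := Concrete.isColimit_exists_of_rep_eq D hc x 0 (by simpa using hx)
  exact ⟨k, t, by simpa using h⟩

def prodRightFunctor (F : ModuleCat.{u} C) : ModuleCat.{u} C ⥤ ModuleCat.{u} C where
  obj X := of C (X × F)
  map f := ofHom (f.hom.prodMap LinearMap.id)

noncomputable def isColimitMapCoconeProdRightFunctor (F : ModuleCat.{u} C)
    {D : J ⥤ ModuleCat.{u} C} {c : Cocone D} (hc : IsColimit c) :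
    IsColimit ((prodRightFunctor F).mapCocone c) :=
  isColimitOfExistsRep _
    (fun ⟨y, v⟩ => by
      obtain ⟨j, x, rfl⟩ := Concrete.isColimit_exists_rep D hc y
      exact ⟨j, (x, v), rfl⟩)
    (fun j ⟨x, v⟩ h => by
      obtain ⟨k, t, ht⟩ := exists_map_eq_zero_of_isColimit hc congr($h.1)
      exact ⟨k, t, Prod.ext ht congr($h.2)⟩)

section Kernels

variable {G D : J ⥤ ModuleCat.{u} C} (π : G ⟶ D)

def kerFunctor : J ⥤ ModuleCat.{u} C where
  obj j := of C (LinearMap.ker (π.app j).hom)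
  map {i j} t := ofHom ((G.map t).hom.restrict fun x (hx : π.app i x = 0) => by
    simp [LinearMap.mem_ker, NatTrans.naturality_apply, hx])

variable {cG : Cocone G} {cD : Cocone D} (φ : cG.pt ⟶ cD.pt)
  (hφ : ∀ j, cG.ι.app j ≫ φ = π.app j ≫ cD.ι.app j)

def kerCocone : Cocone (kerFunctor π) where
  pt := of C (LinearMap.ker φ.hom)
  ι :=
    { app j := ofHom ((cG.ι.app j).hom.restrict fun x (hx : π.app j x = 0) => by
        simp [LinearMap.mem_ker, ← ConcreteCategory.comp_apply, hφ, hx])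
      naturality i j t := by
        ext x
        exact Subtype.ext (ConcreteCategory.congr_hom (cG.w t) x.1) }

noncomputable def isColimitKerCocone (hG : IsColimit cG) (hD : IsColimit cD) :
    IsColimit (kerCocone π φ hφ) :=
  isColimitOfExistsRep _
    (fun y => by
      obtain ⟨j, x, hx⟩ := Concrete.isColimit_exists_rep G hG y.1
      have hx0 : cD.ι.app j (π.app j x) = 0 := by
        rw [← ConcreteCategory.comp_apply, ← hφ, ConcreteCategory.comp_apply, hx]
        exact y.2
      obtain ⟨k, t, ht⟩ := exists_map_eq_zero_of_isColimit hD hx0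
      refine ⟨k, ⟨G.map t x, by simp [NatTrans.naturality_apply, ht]⟩, Subtype.ext ?_⟩
      exact (ConcreteCategory.congr_hom (cG.w t) x).trans hx)
    (fun j x h => by
      obtain ⟨k, t, ht⟩ := exists_map_eq_zero_of_isColimit hG congr($h.1)
      exact ⟨k, t, Subtype.ext ht⟩)

end Kernels

end ModuleCat

namespace StableUnderCokernelsOfCofibrations

variable {C : Type u} [Ring C] {S : Set (ModuleCat.{u} C)}

theorem mem_of_surjective (hS : StableUnderCokernelsOfCofibrations C S) {N P : ModuleCat.{u} C}
    (g : N →ₗ[C] P) (hg : Function.Surjective g) (hker : ModuleCat.of C (LinearMap.ker g) ∈ S)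
    (hN : N ∈ S) : P ∈ S :=
  hS _ N P _ g (LinearMap.ker g).injective_subtype hg g.exact_subtype_ker_map hker hN

theorem mem_of_linearEquiv (hS : StableUnderCokernelsOfCofibrations C S)
    (hfree : ∀ M : ModuleCat.{u} C, Module.Free C M → M ∈ S) {A B : Type u} [AddCommGroup A]
    [Module C A] [AddCommGroup B] [Module C B] (e : A ≃ₗ[C] B) (hA : ModuleCat.of C A ∈ S) :
    ModuleCat.of C B ∈ S :=
  hS.mem_of_surjective e.toLinearMap e.surjective
    (hfree _ (by rw [LinearEquiv.ker]; infer_instance)) hA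

theorem ker_mem_of_projective (hS : StableUnderCokernelsOfCofibrations C S)
    (hfree : ∀ M : ModuleCat.{u} C, Module.Free C M → M ∈ S) {X P : ModuleCat.{u} C}
    [Module.Projective C P] (g : X →ₗ[C] P) (hg : Function.Surjective g) (hX : X ∈ S)
    (hP : P ∈ S) : ModuleCat.of C (LinearMap.ker g) ∈ S := by
  obtain ⟨σ, hσ⟩ := Module.projective_lifting_property g LinearMap.id hg
  let e := (g.exact_subtype_ker_map.splitSurjectiveEquiv (LinearMap.ker g).injective_subtype
    ⟨σ, hσ⟩).1
  have hprod : ModuleCat.of C (LinearMap.ker g × P) ∈ S := hS.mem_of_linearEquiv hfree e hX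
  exact hS P _ _ _ _ LinearMap.inr_injective LinearMap.fst_surjective Function.Exact.inr_fst hP hprod

end StableUnderCokernelsOfCofibrations

namespace VogelClassC

variable {C : Type u} [Ring C]

theorem isFreeColimCokerClosed : IsFreeColimCokerClosed C (VogelClassC C) :=
  ⟨fun M hM _ hS => hS.1 M hM,
   fun J iJ hJ D c hc hD S hS => hS.2.1 J iJ hJ D c hc fun j => hD j S hS,
   fun M N P f g hf hg hfg hM hN S hS => hS.2.2 M N P f g hf hg hfg (hM S hS) (hN S hS)⟩

theorem free_mem {M : ModuleCat.{u} C} (hM : Module.Free C M) : M ∈ VogelClassC C :=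
  isFreeColimCokerClosed.1 M hM

theorem colimit_mem {J : Type u} [SmallCategory J] [IsFiltered J] {D : J ⥤ ModuleCat.{u} C}
    {c : Cocone D} (hc : IsColimit c) (hD : ∀ j, D.obj j ∈ VogelClassC C) : c.pt ∈ VogelClassC C :=
  isFreeColimCokerClosed.2.1 J inferInstance inferInstance D c hc hD

theorem mem_of_surjective {N P : ModuleCat.{u} C} (g : N →ₗ[C] P) (hg : Function.Surjective g)
    (hker : ModuleCat.of C (LinearMap.ker g) ∈ VogelClassC C) (hN : N ∈ VogelClassC C) :
    P ∈ VogelClassC C :=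
  isFreeColimCokerClosed.2.2.mem_of_surjective g hg hker hN

theorem mem_of_linearEquiv {A B : Type u} [AddCommGroup A] [Module C A] [AddCommGroup B]
    [Module C B] (e : A ≃ₗ[C] B) (hA : ModuleCat.of C A ∈ VogelClassC C) :
    ModuleCat.of C B ∈ VogelClassC C :=
  isFreeColimCokerClosed.2.2.mem_of_linearEquiv isFreeColimCokerClosed.1 e hA

theorem ker_mem_of_projective {X P : ModuleCat.{u} C} [Module.Projective C P]
    (g : X →ₗ[C] P) (hg : Function.Surjective g) (hX : X ∈ VogelClassC C)
    (hP : P ∈ VogelClassC C) : ModuleCat.of C (LinearMap.ker g) ∈ VogelClassC C :=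
  isFreeColimCokerClosed.2.2.ker_mem_of_projective isFreeColimCokerClosed.1 g hg hX hP

@[elab_as_elim]
theorem induction_on {motive : (M : ModuleCat.{u} C) → M ∈ VogelClassC C → Prop}
    (free : ∀ (M : ModuleCat.{u} C) (hM : Module.Free C M), motive M (free_mem hM))
    (colimit : ∀ (J : Type u) [SmallCategory J] [IsFiltered J] (D : J ⥤ ModuleCat.{u} C)
      (c : Cocone D) (hc : IsColimit c) (hD : ∀ j, D.obj j ∈ VogelClassC C),
        (∀ j, motive (D.obj j) (hD j)) → motive c.pt (colimit_mem hc hD))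
    (coker : ∀ (N P : ModuleCat.{u} C) (g : N →ₗ[C] P) (hg : Function.Surjective g)
      (hker : ModuleCat.of C (LinearMap.ker g) ∈ VogelClassC C) (hN : N ∈ VogelClassC C),
        motive N hN → motive P (mem_of_surjective g hg hker hN))
    {M : ModuleCat.{u} C} (hM : M ∈ VogelClassC C) : motive M hM := by
  refine (hM {M | ∃ hM, motive M hM} ⟨fun M hM => ⟨_, free M hM⟩,
    fun J _ _ D c hc hD => ⟨_, colimit J D c hc (fun j => (hD j).1) fun j => (hD j).2⟩,
    ?_⟩).2
  rintro K N P f g hf hg hfg ⟨hK, -⟩ ⟨hN, hNm⟩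
  have hker : ModuleCat.of C (LinearMap.ker g) ∈ VogelClassC C :=
    mem_of_linearEquiv ((LinearEquiv.ofInjective f hf).trans
      (LinearEquiv.ofEq _ _ (LinearMap.exact_iff.1 hfg).symm)) hK
  exact ⟨_, coker N P g hg hker hN hNm⟩

open LinearMap in
theorem prod_mem_of_free {A F : ModuleCat.{u} C} (hA : A ∈ VogelClassC C)
    (hF : Module.Free C F) : ModuleCat.of C (A × F) ∈ VogelClassC C := by
  induction hA using induction_on with
  | free M hM => exact free_mem inferInstance
  | colimit J D c hc _ ih =>
    exact colimit_mem (ModuleCat.isColimitMapCoconeProdRightFunctor F hc) ih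
  | coker N P g hg hker _ ih =>
    refine isFreeColimCokerClosed.2.2 _ (ModuleCat.of C (N × F)) (ModuleCat.of C (P × F))
      (inl C N F ∘ₗ (ker g).subtype) (g.prodMap id) (inl_injective.comp (ker g).injective_subtype)
      (hg.prodMap Function.surjective_id) ?_ hker ih
    rintro ⟨n, v⟩
    simp [Prod.ext_iff, eq_comm]

open LinearMap ModuleCat in
theorem mem_of_extension {B Q : ModuleCat.{u} C} (g : B →ₗ[C] Q) (hg : Function.Surjective g)
    (hker : ModuleCat.of C (ker g) ∈ VogelClassC C) (hQ : Q ∈ VogelClassC C) :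
    B ∈ VogelClassC C := by
  induction hQ using induction_on generalizing B with
  | free Q hQ =>
    have : Module.Projective C Q := Module.Projective.of_free
    obtain ⟨σ, hσ⟩ := Module.projective_lifting_property g id hg
    exact mem_of_linearEquiv (g.exact_subtype_ker_map.splitSurjectiveEquiv
      (ker g).injective_subtype ⟨σ, hσ⟩).1.symm (prod_mem_of_free hker hQ)
  | colimit J D c hc _ ih =>
    -- `B` is the colimit of the fibre products `D j ×_{c.pt} B`, realised as kernels.
    have := IsFiltered.isConnected J
    let π : D ⋙ prodRightFunctor B ⟶ (Functor.const J).obj c.pt :=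
      { app j := ofHom ((c.ι.app j).hom ∘ₗ fst C _ B - g ∘ₗ snd C _ B)
        naturality i j t := by
          ext ⟨x, b⟩
          exact congrArg (· - g b) (Cocone.w_apply c t x) }
    let φ : ((prodRightFunctor B).mapCocone c).pt ⟶ (constCocone J c.pt).pt :=
      ofHom (id ∘ₗ fst C _ B - g ∘ₗ snd C _ B)
    have hfiber_j : ∀ j, (kerFunctor π).obj j ∈ VogelClassC C := fun j =>
      show ModuleCat.of C (fiberProduct (c.ι.app j).hom g) ∈ VogelClassC C from
        ih j (fiberProductFst _ g) (fiberProductFst_surjective hg)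
          (mem_of_linearEquiv (kerFiberProductFstEquiv _ g).symm hker)
    have hfiber : ModuleCat.of C (fiberProduct id g) ∈ VogelClassC C :=
      colimit_mem (isColimitKerCocone π φ (fun j => by ext; rfl)
        (isColimitMapCoconeProdRightFunctor B hc) (isColimitConstCocone J c.pt)) hfiber_j
    exact mem_of_linearEquiv (LinearEquiv.ofBijective (fiberProductSnd id g)
      ⟨fiberProductSnd_injective Function.injective_id,
        fiberProductSnd_surjective Function.surjective_id⟩) hfiber
  | coker N P p hp hkerp _ ih =>
    have hfiber : ModuleCat.of C (fiberProduct p g) ∈ VogelClassC C :=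
      ih (fiberProductFst p g) (fiberProductFst_surjective hg)
        (mem_of_linearEquiv (kerFiberProductFstEquiv p g).symm hker)
    exact mem_of_surjective (fiberProductSnd p g) (fiberProductSnd_surjective hp)
      (mem_of_linearEquiv (kerFiberProductSndEquiv p g).symm hkerp) hfiber

open LinearMap in
/-- The fibre product of `ε` and `g` is an extension of `X` by `ker ε`, and splits over `F` with
kernel `ker g`. -/
theorem ker_mem_of_projective_cover {F M X : ModuleCat.{u} C} [Module.Projective C F]
    (ε : F →ₗ[C] M) (hε : Function.Surjective ε) (hF : F ∈ VogelClassC C)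
    (hkerε : ModuleCat.of C (ker ε) ∈ VogelClassC C) (g : X →ₗ[C] M)
    (hg : Function.Surjective g) (hX : X ∈ VogelClassC C) :
    ModuleCat.of C (ker g) ∈ VogelClassC C := by
  have hfiber : ModuleCat.of C (fiberProduct ε g) ∈ VogelClassC C :=
    mem_of_extension (fiberProductSnd ε g) (fiberProductSnd_surjective hε)
      (mem_of_linearEquiv (kerFiberProductSndEquiv ε g).symm hkerε) hX
  exact mem_of_linearEquiv (kerFiberProductFstEquiv ε g)
    (ker_mem_of_projective (fiberProductFst ε g) (fiberProductFst_surjective hg) hfiber hF)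

open LinearMap ModuleCat in
theorem ker_mem {X M : ModuleCat.{u} C} (g : X →ₗ[C] M) (hg : Function.Surjective g)
    (hX : X ∈ VogelClassC C) (hM : M ∈ VogelClassC C) :
    ModuleCat.of C (ker g) ∈ VogelClassC C := by
  induction hM using induction_on generalizing X with
  | free M hM =>
    have : Module.Projective C M := Module.Projective.of_free
    exact ker_mem_of_projective g hg hX (free_mem hM)
  | colimit J D c hc _ ih =>
    have : PreservesColimitsOfSize.{u, u} (free C) := (adj C).leftAdjoint_preservesColimits
    let ε := (adj C).counit
    have hε : ∀ N : ModuleCat.{u} C, Function.Surjective (ε.app N).hom := fun N n =>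
      ⟨freeMk n, by simp [ε, adj]⟩
    have hfree : ∀ N : ModuleCat.{u} C, (forget _ ⋙ free C).obj N ∈ VogelClassC C := fun N =>
      free_mem (inferInstanceAs (Module.Free C (N →₀ C)))
    -- The canonical free covers are natural, and `forget ⋙ free` preserves filtered colimits.
    let φ : ((forget _ ⋙ free C).mapCocone c).pt ⟶ c.pt := ε.app c.pt
    have hkerε : ModuleCat.of C (ker φ.hom) ∈ VogelClassC C :=
      colimit_mem (isColimitKerCocone (Functor.whiskerLeft D ε) φ
        (fun j => ε.naturality (c.ι.app j)) (isColimitOfPreserves (forget _ ⋙ free C) hc) hc)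
        fun j => ih j _ (hε _) (hfree _)
    have : Module.Projective C ((forget _ ⋙ free C).obj c.pt) :=
      inferInstanceAs (Module.Projective C (c.pt →₀ C))
    exact ker_mem_of_projective_cover _ (hε c.pt) (hfree c.pt) hkerε g hg hX
  | coker N P p hp hkerp _ ih =>
    have hfiber : ModuleCat.of C (fiberProduct p g) ∈ VogelClassC C :=
      mem_of_extension (fiberProductSnd p g) (fiberProductSnd_surjective hp)
        (mem_of_linearEquiv (kerFiberProductSndEquiv p g).symm hkerp) hX
    exact mem_of_linearEquiv (kerFiberProductFstEquiv p g)
      (ih (fiberProductFst p g) (fiberProductFst_surjective hg) hfiber)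

end VogelClassC

/-- if `f : F → M` is an epimorphism from a free `C`-module onto a
module `M` belonging to the smallest class `𝒞` (containing all free modules, stable
under filtered colimits and under cokernels of cofibrations), then the kernel of `f`
belongs to `𝒞`. -/
theorem ker_mem_vogelClassC (C : Type u) [Ring C]
    (F M : ModuleCat.{u} C) (hF : Module.Free C F)
    (f : F →ₗ[C] M) (hf : Function.Surjective f)
    (hM : M ∈ VogelClassC C) :
    ModuleCat.of C (LinearMap.ker f) ∈ VogelClassC C :=
  VogelClassC.ker_mem f hf (VogelClassC.free_mem hF) hM
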